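/- The map Ψ: SO(3) × (R/τ*Z) → M₃, Ψ(M,θ) = M x*(·−θ), is a bijection, where x* is a non-circular non-rectilinear periodic solution of the central force equation in R³ lying in the plane x₃ = 0, normalized so that x*(0) = (max|x*|, 0, 0) with positive angular momentum, τ* is the minimal period of |x*|, and M₃ = {M x*(·−θ) : M ∈ O(3), θ ∈ R}. -/

import Mathlib

open Classical Matrix

noncomputable def en3 (v : Fin 3 → ℝ) : ℝ := Real.sqrt (∑ i, v i ^ 2)

/-- The map `φ(v) = f(|v|) v/|v|`, `φ(0) = 0`. -/
noncomputable def phiMap (f : ℝ → ℝ) (v : Fin 3 → ℝ) : Fin 3 → ℝ :=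
  if v = 0 then 0 else (f (en3 v) / en3 v) • v

/-!
Angular momentum `x × φ(ẋ)` is conserved, and `x ⊥ ẋ` wherever `|x|` is maximal, in particular at
`0` and at `τ*`. Hence `|φ(ẋ(τ*))| = |φ(ẋ(0))|`, so `|ẋ(τ*)| = |ẋ(0)|`, and some rotation `R` takes
`(x(0), ẋ(0))` to `(x(τ*), ẋ(τ*))`. Uniqueness for the Cauchy problem gives `x(· + τ*) = R x`, so
the time shifts realised by rotations form a group containing `τ* ℤ`: this gives surjectivity after
reducing `θ` modulo `τ*`, an orientation-reversing `M` being corrected by the reflection in the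
plane `x₃ = 0`, which fixes `x*`. For injectivity, two representations make `θ₂ - θ₁` a period
of `|x*|`, hence zero by minimality; the two rotations then agree on `x*(0)` and `ẋ*(0)`, hence on
their cross product, hence everywhere.
-/

namespace Matrix

theorem of_mulVec_eq_mul_transpose {m n R : Type*} [Fintype n] [CommRing R] (A : Matrix n n R)
    (X : Matrix m n R) : of (fun i => A *ᵥ X i) = X * Aᵀ := by
  ext i j
  simp [mul_apply, mulVec, dotProduct, mul_comm]

variable {n R : Type*} [Fintype n] [DecidableEq n] [CommRing R] {A : Matrix n n R}

theorem mem_specialOrthogonalGroup_iff_transpose_mul_self :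
    A ∈ specialOrthogonalGroup n R ↔ Aᵀ * A = 1 ∧ A.det = 1 := by
  rw [mem_specialOrthogonalGroup_iff, mem_orthogonalGroup_iff']

theorem transpose_mulVec_mulVec (hA : A ∈ orthogonalGroup n R) (v : n → R) :
    Aᵀ *ᵥ (A *ᵥ v) = v := by
  rw [mulVec_mulVec, (mem_orthogonalGroup_iff' n R).1 hA, one_mulVec]

theorem mulVec_transpose_mulVec (hA : A ∈ orthogonalGroup n R) (v : n → R) :
    A *ᵥ (Aᵀ *ᵥ v) = v := by
  rw [mulVec_mulVec, (mem_orthogonalGroup_iff n R).1 hA, one_mulVec]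

theorem mulVec_dotProduct_mulVec (hA : A ∈ orthogonalGroup n R) (v w : n → R) :
    A *ᵥ v ⬝ᵥ A *ᵥ w = v ⬝ᵥ w := by
  rw [dotProduct_mulVec, ← mulVec_transpose, transpose_mulVec_mulVec hA]

theorem transpose_mem_specialOrthogonalGroup (hA : A ∈ specialOrthogonalGroup n R) :
    Aᵀ ∈ specialOrthogonalGroup n R :=
  (⟨A, hA⟩ : specialOrthogonalGroup n R)⁻¹.2

end Matrix

theorem dotProduct_self_nonneg {n : Type*} [Fintype n] (v : n → ℝ) : 0 ≤ v ⬝ᵥ v :=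
  Finset.sum_nonneg fun i _ => mul_self_nonneg (v i)

theorem mulVec_cross_mulVec {R : Type*} [CommRing R] {A : Matrix (Fin 3) (Fin 3) R}
    (hA : A ∈ specialOrthogonalGroup (Fin 3) R) (u v : Fin 3 → R) :
    (A *ᵥ u) ⨯₃ (A *ᵥ v) = A *ᵥ (u ⨯₃ v) := by
  have hA' := mem_specialOrthogonalGroup_iff.1 hA
  have triple (w : Fin 3 → R) :
      A *ᵥ w ⬝ᵥ (A *ᵥ u) ⨯₃ (A *ᵥ v) = A *ᵥ w ⬝ᵥ A *ᵥ (u ⨯₃ v) := by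
    have hdet : det ![A *ᵥ w, A *ᵥ u, A *ᵥ v] = det ![w, u, v] :=
      calc det ![A *ᵥ w, A *ᵥ u, A *ᵥ v] = det (of ![w, u, v] * Aᵀ) := by
            rw [← of_mulVec_eq_mul_transpose]
            congr 1
            ext i j
            fin_cases i <;> rfl
        _ = det ![w, u, v] := by rw [det_mul, det_transpose, hA'.2, mul_one]; rfl
    rw [triple_product_eq_det, hdet, mulVec_dotProduct_mulVec hA'.1, triple_product_eq_det]
  ext i
  have := triple (Aᵀ *ᵥ Pi.single i 1)
  rwa [mulVec_transpose_mulVec hA'.1, single_one_dotProduct, single_one_dotProduct] at this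

theorem det_vec3_cross {R : Type*} [CommRing R] (a b : Fin 3 → R) :
    det ![a, b, a ⨯₃ b] = a ⨯₃ b ⬝ᵥ a ⨯₃ b := by
  rw [← triple_product_eq_det, triple_product_permutation, triple_product_permutation]

theorem det_vec3_cross_pos {a b : Fin 3 → ℝ} (hab : LinearIndependent ℝ ![a, b]) :
    0 < det ![a, b, a ⨯₃ b] := by
  rw [det_vec3_cross]
  exact (dotProduct_self_nonneg _).lt_of_ne' <|
    dotProduct_self_eq_zero.not.2 (crossProduct_ne_zero_iff_linearIndependent.2 hab)

theorem specialOrthogonalGroup_ext_of_linearIndependent {A B : Matrix (Fin 3) (Fin 3) ℝ}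
    (hA : A ∈ specialOrthogonalGroup (Fin 3) ℝ) (hB : B ∈ specialOrthogonalGroup (Fin 3) ℝ)
    {a b : Fin 3 → ℝ} (hab : LinearIndependent ℝ ![a, b]) (ha : A *ᵥ a = B *ᵥ a)
    (hb : A *ᵥ b = B *ᵥ b) : A = B := by
  have hc : A *ᵥ (a ⨯₃ b) = B *ᵥ (a ⨯₃ b) := by
    rw [← mulVec_cross_mulVec hA, ← mulVec_cross_mulVec hB, ha, hb]
  set X : Matrix (Fin 3) (Fin 3) ℝ := ![a, b, a ⨯₃ b]
  have hX : IsUnit X := (isUnit_iff_isUnit_det _).2 (det_vec3_cross_pos hab).ne'.isUnit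
  have h : X * Aᵀ = X * Bᵀ := by
    rw [← of_mulVec_eq_mul_transpose, ← of_mulVec_eq_mul_transpose]
    exact congrArg of (funext fun i => by fin_cases i <;> simp [X, ha, hb, hc])
  simpa using congrArg transpose (hX.mul_left_cancel h)

theorem exists_mem_specialOrthogonalGroup_mulVec_eq {a b a' b' : Fin 3 → ℝ}
    (hab : LinearIndependent ℝ ![a, b]) (ha : a ⬝ᵥ a = a' ⬝ᵥ a') (hb : b ⬝ᵥ b = b' ⬝ᵥ b')
    (horth : a ⬝ᵥ b = 0) (horth' : a' ⬝ᵥ b' = 0) :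
    ∃ A ∈ specialOrthogonalGroup (Fin 3) ℝ, A *ᵥ a = a' ∧ A *ᵥ b = b' := by
  -- `A = (X⁻¹ X')ᵀ` maps the rows of `X` to those of `X'`; it is orthogonal since `X Xᵀ = X' X'ᵀ`.
  set X : Matrix (Fin 3) (Fin 3) ℝ := ![a, b, a ⨯₃ b]
  set X' : Matrix (Fin 3) (Fin 3) ℝ := ![a', b', a' ⨯₃ b']
  have hgram : X * Xᵀ = X' * X'ᵀ := by
    have hentry (Y : Matrix (Fin 3) (Fin 3) ℝ) (i j) : (Y * Yᵀ) i j = Y i ⬝ᵥ Y j := rfl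
    ext i j
    rw [hentry, hentry]
    fin_cases i <;> fin_cases j <;>
      simp [X, X', cross_dot_cross, dot_self_cross, dot_cross_self, dotProduct_comm b a,
        dotProduct_comm b' a', dotProduct_comm (a ⨯₃ b), dotProduct_comm (a' ⨯₃ b'), ha, hb,
        horth, horth']
  have hdet : X.det = X'.det := by
    simp only [X, X', det_vec3_cross, cross_dot_cross, dotProduct_comm b a,
      dotProduct_comm b' a', ha, hb, horth, horth']
  have hX : IsUnit X.det := (det_vec3_cross_pos hab).ne'.isUnit
  have hXt : IsUnit Xᵀ.det := by rwa [det_transpose]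
  refine ⟨(X⁻¹ * X')ᵀ, ?_, ?_⟩
  · rw [mem_specialOrthogonalGroup_iff_transpose_mul_self, transpose_transpose, det_transpose,
      det_mul, det_nonsing_inv, ← hdet, Ring.inverse_mul_cancel _ hX]
    refine ⟨?_, rfl⟩
    calc X⁻¹ * X' * (X⁻¹ * X')ᵀ = X⁻¹ * (X' * X'ᵀ) * X⁻¹ᵀ := by
          simp only [transpose_mul, Matrix.mul_assoc]
      _ = X⁻¹ * X * (Xᵀ * X⁻¹ᵀ) := by simp only [← hgram, Matrix.mul_assoc]
      _ = 1 := by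
          rw [nonsing_inv_mul _ hX, transpose_nonsing_inv, mul_nonsing_inv _ hXt, one_mul]
  · have hrows : of (fun i => (X⁻¹ * X')ᵀ *ᵥ X i) = X' := by
      rw [of_mulVec_eq_mul_transpose, transpose_transpose, ← Matrix.mul_assoc,
        mul_nonsing_inv _ hX, Matrix.one_mul]
    exact ⟨congrFun hrows 0, congrFun hrows 1⟩

theorem exists_mem_specialOrthogonalGroup_mulVec_eq_of_apply_two_eq_zero
    {M : Matrix (Fin 3) (Fin 3) ℝ} (hM : M ∈ orthogonalGroup (Fin 3) ℝ) :
    ∃ N ∈ specialOrthogonalGroup (Fin 3) ℝ, ∀ v : Fin 3 → ℝ, v 2 = 0 → N *ᵥ v = M *ᵥ v := by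
  have hdet : M.det * M.det = 1 := by
    simpa using congrArg det ((mem_orthogonalGroup_iff' _ _).1 hM)
  rcases mul_self_eq_one_iff.1 hdet with h | h
  · exact ⟨M, mem_specialOrthogonalGroup_iff.2 ⟨hM, h⟩, fun _ _ => rfl⟩
  set D : Matrix (Fin 3) (Fin 3) ℝ := diagonal ![1, 1, -1]
  have hD : D ∈ orthogonalGroup (Fin 3) ℝ := by
    rw [mem_orthogonalGroup_iff']
    ext i j
    fin_cases i <;> fin_cases j <;> simp [D]
  refine ⟨M * D, mem_specialOrthogonalGroup_iff.2 ⟨mul_mem hM hD, ?_⟩, fun v hv => ?_⟩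
  · simp [D, h, det_diagonal, Fin.prod_univ_three]
  · rw [← mulVec_mulVec]
    congr 1
    ext i
    fin_cases i <;> simp [D, mulVec_diagonal, hv]

section Calculus

variable {n : Type*} [Fintype n] {u w : ℝ → n → ℝ} {u' w' : n → ℝ} {t : ℝ}

theorem HasDerivAt.const_mulVec [DecidableEq n] (A : Matrix n n ℝ) (hu : HasDerivAt u u' t) :
    HasDerivAt (fun s => A *ᵥ u s) (A *ᵥ u') t := by
  have := (toLin' A).toContinuousLinearMap.hasFDerivAt.comp_hasDerivAt t hu
  simpa [Function.comp_def] using this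

theorem HasDerivAt.dotProduct (hu : HasDerivAt u u' t) (hw : HasDerivAt w w' t) :
    HasDerivAt (fun s => u s ⬝ᵥ w s) (u t ⬝ᵥ w' + u' ⬝ᵥ w t) t :=
  (dotProductBilin ℝ ℝ : (n → ℝ) →ₗ[ℝ] (n → ℝ) →ₗ[ℝ] ℝ).toContinuousBilinearMap
    |>.hasDerivAt_of_bilinear (fun _ => hu) (fun _ => hw)

theorem dotProduct_eq_zero_of_isLocalMax {x : ℝ → n → ℝ} {v : n → ℝ}
    (hmax : IsLocalMax (fun s => x s ⬝ᵥ x s) t) (hx : HasDerivAt x v t) : x t ⬝ᵥ v = 0 := by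
  have := hmax.hasDerivAt_eq_zero (hx.dotProduct hx)
  rw [dotProduct_comm v] at this
  linarith

end Calculus

theorem HasDerivAt.crossProduct {u w : ℝ → Fin 3 → ℝ} {u' w' : Fin 3 → ℝ} {t : ℝ}
    (hu : HasDerivAt u u' t) (hw : HasDerivAt w w' t) :
    HasDerivAt (fun s => u s ⨯₃ w s) (u t ⨯₃ w' + u' ⨯₃ w t) t :=
  (_root_.crossProduct (R := ℝ)).toContinuousBilinearMap.hasDerivAt_of_bilinear (fun _ => hu)
    (fun _ => hw)

theorem eq_of_periodic_sub_of_mem_Ico {α : Type*} {g : ℝ → α} {τ a b : ℝ}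
    (hmin : ∀ p, 0 < p → Function.Periodic g p → τ ≤ p) (hab : Function.Periodic g (b - a))
    (ha : a ∈ Set.Ico 0 τ) (hb : b ∈ Set.Ico 0 τ) : a = b := by
  by_contra hne
  rcases lt_or_gt_of_ne hne with h | h
  · linarith [hmin _ (sub_pos.2 h) hab, hb.2, ha.1]
  · linarith [hmin _ (sub_pos.2 h) (by simpa using hab.neg), ha.2, hb.1]

theorem en3_eq_sqrt (v : Fin 3 → ℝ) : en3 v = √(v ⬝ᵥ v) := by
  simp [en3, dotProduct, sq]

theorem en3_sq (v : Fin 3 → ℝ) : en3 v ^ 2 = v ⬝ᵥ v := by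
  rw [en3_eq_sqrt, Real.sq_sqrt (dotProduct_self_nonneg v)]

theorem en3_pos {v : Fin 3 → ℝ} (hv : v ≠ 0) : 0 < en3 v := by
  rw [en3_eq_sqrt, Real.sqrt_pos]
  exact (dotProduct_self_nonneg v).lt_of_ne' (dotProduct_self_eq_zero.not.2 hv)

theorem en3_mulVec {A : Matrix (Fin 3) (Fin 3) ℝ} (hA : A ∈ orthogonalGroup (Fin 3) ℝ)
    (v : Fin 3 → ℝ) : en3 (A *ᵥ v) = en3 v := by
  rw [en3_eq_sqrt, en3_eq_sqrt, mulVec_dotProduct_mulVec hA]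

section PhiMap

variable (f : ℝ → ℝ)

theorem phiMap_eq_smul (v : Fin 3 → ℝ) : phiMap f v = (f (en3 v) / en3 v) • v := by
  by_cases hv : v = 0 <;> simp [phiMap, hv]

theorem phiMap_mulVec {A : Matrix (Fin 3) (Fin 3) ℝ} (hA : A ∈ orthogonalGroup (Fin 3) ℝ)
    (v : Fin 3 → ℝ) : phiMap f (A *ᵥ v) = A *ᵥ phiMap f v := by
  rw [phiMap_eq_smul, phiMap_eq_smul, en3_mulVec hA, mulVec_smul]

theorem cross_phiMap_self (v : Fin 3 → ℝ) : v ⨯₃ phiMap f v = 0 := by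
  rw [phiMap_eq_smul, map_smul, cross_self, smul_zero]

theorem dotProduct_phiMap_eq_zero {x v : Fin 3 → ℝ} (h : x ⬝ᵥ v = 0) : x ⬝ᵥ phiMap f v = 0 := by
  rw [phiMap_eq_smul, dotProduct_smul, h, smul_zero]

theorem phiMap_dotProduct_self {v : Fin 3 → ℝ} (hv : v ≠ 0) :
    phiMap f v ⬝ᵥ phiMap f v = f (en3 v) ^ 2 := by
  have := (en3_pos hv).ne'
  rw [phiMap_eq_smul, dotProduct_smul, smul_dotProduct, ← en3_sq, smul_eq_mul, smul_eq_mul]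
  field_simp

end PhiMap

def rotationalPeriods {n R : Type*} [Fintype n] [DecidableEq n] [CommRing R]
    (x : ℝ → n → R) : AddSubgroup ℝ where
  carrier := {c | ∃ A ∈ specialOrthogonalGroup n R, ∀ t, x (t + c) = A *ᵥ x t}
  zero_mem' := ⟨1, one_mem _, fun t => by simp⟩
  add_mem' := by
    rintro c d ⟨A, hA, hc⟩ ⟨B, hB, hd⟩
    exact ⟨B * A, mul_mem hB hA, fun t => by rw [← add_assoc, hd, hc, mulVec_mulVec]⟩
  neg_mem' := by
    rintro c ⟨A, hA, hc⟩
    refine ⟨Aᵀ, transpose_mem_specialOrthogonalGroup hA, fun t => ?_⟩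
    have := hc (t + -c)
    rw [neg_add_cancel_right] at this
    rw [this, transpose_mulVec_mulVec (mem_specialOrthogonalGroup_iff.1 hA).1]

theorem periodic_en3_of_mem_rotationalPeriods {x : ℝ → Fin 3 → ℝ} {c : ℝ}
    (hc : c ∈ rotationalPeriods x) : Function.Periodic (fun t => en3 (x t)) c := by
  obtain ⟨A, hA, hAx⟩ := hc
  intro t
  simp only [hAx, en3_mulVec (mem_specialOrthogonalGroup_iff.1 hA).1]

theorem eq_and_eq_of_mulVec_comp_sub_eq {x : ℝ → Fin 3 → ℝ} {v₀ : Fin 3 → ℝ}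
    (hx : HasDerivAt x v₀ 0) (hli : LinearIndependent ℝ ![x 0, v₀]) {τ : ℝ}
    (hmin : ∀ p, 0 < p → Function.Periodic (fun t => en3 (x t)) p → τ ≤ p)
    {A B : Matrix (Fin 3) (Fin 3) ℝ} (hA : A ∈ specialOrthogonalGroup (Fin 3) ℝ)
    (hB : B ∈ specialOrthogonalGroup (Fin 3) ℝ) {α β : ℝ} (hα : α ∈ Set.Ico 0 τ)
    (hβ : β ∈ Set.Ico 0 τ) (h : ∀ t, A *ᵥ x (t - α) = B *ᵥ x (t - β)) : A = B ∧ α = β := by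
  have hshift : β - α ∈ rotationalPeriods x := by
    refine ⟨Aᵀ * B, mul_mem (transpose_mem_specialOrthogonalGroup hA) hB, fun t => ?_⟩
    calc x (t + (β - α)) = Aᵀ *ᵥ (A *ᵥ x (t + β - α)) := by
          rw [transpose_mulVec_mulVec (mem_specialOrthogonalGroup_iff.1 hA).1, add_sub_assoc]
      _ = (Aᵀ * B) *ᵥ x t := by rw [h, add_sub_cancel_right, mulVec_mulVec]
  obtain rfl : α = β :=
    eq_of_periodic_sub_of_mem_Ico hmin (periodic_en3_of_mem_rotationalPeriods hshift) hα hβ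
  have hAB : (fun t => A *ᵥ x t) = fun t => B *ᵥ x t := funext fun t => by simpa using h (t + α)
  have hBv := hx.const_mulVec B
  rw [← hAB] at hBv
  exact ⟨specialOrthogonalGroup_ext_of_linearIndependent hA hB hli (congrFun hAB 0)
    ((hx.const_mulVec A).unique hBv), rfl⟩

/-- `v` stands for `ẋ`, and `Vd` for `V'`. -/
structure IsCentralForceSolution (f Vd : ℝ → ℝ) (x v : ℝ → Fin 3 → ℝ) : Prop where
  ne_zero : ∀ t, x t ≠ 0
  hasDerivAt : ∀ t, HasDerivAt x (v t) t
  hasDerivAt_phiMap : ∀ t,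
    HasDerivAt (fun s => phiMap f (v s)) ((Vd (en3 (x t)) / en3 (x t)) • x t) t

namespace IsCentralForceSolution

variable {f Vd : ℝ → ℝ} {x v : ℝ → Fin 3 → ℝ}

theorem mulVec (h : IsCentralForceSolution f Vd x v) {A : Matrix (Fin 3) (Fin 3) ℝ}
    (hA : A ∈ orthogonalGroup (Fin 3) ℝ) :
    IsCentralForceSolution f Vd (fun t => A *ᵥ x t) (fun t => A *ᵥ v t) where
  ne_zero t hx := h.ne_zero t (by simpa [transpose_mulVec_mulVec hA] using congrArg (Aᵀ *ᵥ ·) hx)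
  hasDerivAt t := (h.hasDerivAt t).const_mulVec A
  hasDerivAt_phiMap t := by
    simp_rw [phiMap_mulVec f hA, en3_mulVec hA, ← mulVec_smul]
    exact (h.hasDerivAt_phiMap t).const_mulVec A

theorem comp_add_const (h : IsCentralForceSolution f Vd x v) (c : ℝ) :
    IsCentralForceSolution f Vd (fun t => x (t + c)) (fun t => v (t + c)) where
  ne_zero t := h.ne_zero (t + c)
  hasDerivAt t := (h.hasDerivAt (t + c)).comp_add_const t c
  hasDerivAt_phiMap t := (h.hasDerivAt_phiMap (t + c)).comp_add_const t c

theorem angularMomentum_eq (h : IsCentralForceSolution f Vd x v) (s t : ℝ) :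
    x s ⨯₃ phiMap f (v s) = x t ⨯₃ phiMap f (v t) := by
  have hderiv (r : ℝ) : HasDerivAt (fun s => x s ⨯₃ phiMap f (v s)) 0 r := by
    convert (h.hasDerivAt r).crossProduct (h.hasDerivAt_phiMap r) using 1
    rw [map_smul, cross_self, smul_zero, cross_phiMap_self, zero_add]
  exact is_const_of_deriv_eq_zero (fun r => (hderiv r).differentiableAt)
    (fun r => (hderiv r).deriv) s t

theorem dotProduct_self_eq_of_dotProduct_eq_zero (h : IsCentralForceSolution f Vd x v)
    (hf0 : f 0 = 0) (hfmono : StrictMonoOn f (Set.Ici 0)) {s t : ℝ} (hvs : v s ≠ 0)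
    (hvt : v t ≠ 0) (hs : x s ⬝ᵥ v s = 0) (ht : x t ⬝ᵥ v t = 0)
    (hxst : en3 (x s) = en3 (x t)) : v s ⬝ᵥ v s = v t ⬝ᵥ v t := by
  have hL (r : ℝ) (hr : x r ⬝ᵥ v r = 0) (hvr : v r ≠ 0) :
      x r ⨯₃ phiMap f (v r) ⬝ᵥ x r ⨯₃ phiMap f (v r) = en3 (x r) ^ 2 * f (en3 (v r)) ^ 2 := by
    rw [cross_dot_cross, dotProduct_phiMap_eq_zero f hr, phiMap_dotProduct_self f hvr, en3_sq]
    ring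
  have hfsq : f (en3 (v s)) ^ 2 = f (en3 (v t)) ^ 2 := by
    have := hL s hs hvs
    rw [h.angularMomentum_eq s t, hL t ht hvt, hxst] at this
    exact (mul_left_cancel₀ (pow_pos (en3_pos (h.ne_zero t)) 2).ne' this).symm
  have hfpos {r : ℝ} (hr : v r ≠ 0) : 0 < f (en3 (v r)) :=
    hf0 ▸ hfmono Set.self_mem_Ici (en3_pos hr).le (en3_pos hr)
  have hen : en3 (v s) = en3 (v t) :=
    hfmono.injOn (en3_pos hvs).le (en3_pos hvt).le <|
      (pow_left_inj₀ (hfpos hvs).le (hfpos hvt).le two_ne_zero).1 hfsq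
  rw [← en3_sq, ← en3_sq, hen]

theorem mem_rotationalPeriods (h : IsCentralForceSolution f Vd x v)
    (huniq : ∀ y vy, IsCentralForceSolution f Vd y vy → y 0 = x 0 → vy 0 = v 0 → y = x)
    {A : Matrix (Fin 3) (Fin 3) ℝ} (hA : A ∈ specialOrthogonalGroup (Fin 3) ℝ) {c : ℝ}
    (hx : A *ᵥ x 0 = x c) (hv : A *ᵥ v 0 = v c) : c ∈ rotationalPeriods x := by
  have hA' := (mem_specialOrthogonalGroup_iff.1 hA).1
  have hAt := (mem_specialOrthogonalGroup_iff.1 (transpose_mem_specialOrthogonalGroup hA)).1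
  have hy := huniq _ _ ((h.comp_add_const c).mulVec hAt)
    (by simp [← hx, transpose_mulVec_mulVec hA']) (by simp [← hv, transpose_mulVec_mulVec hA'])
  refine ⟨A, hA, fun t => ?_⟩
  rw [← congrFun hy t]
  exact (mulVec_transpose_mulVec hA' _).symm

theorem mem_rotationalPeriods_of_en3_eq_max (h : IsCentralForceSolution f Vd x v)
    (hf0 : f 0 = 0) (hfmono : StrictMonoOn f (Set.Ici 0))
    (huniq : ∀ y vy, IsCentralForceSolution f Vd y vy → y 0 = x 0 → vy 0 = v 0 → y = x)
    (hli : LinearIndependent ℝ ![x 0, v 0]) {c : ℝ} (hvc : v c ≠ 0)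
    (hmax : ∀ t, en3 (x t) ≤ en3 (x 0)) (hc : en3 (x c) = en3 (x 0)) :
    c ∈ rotationalPeriods x := by
  have horth {s : ℝ} (hs : en3 (x s) = en3 (x 0)) : x s ⬝ᵥ v s = 0 := by
    refine dotProduct_eq_zero_of_isLocalMax (Filter.Eventually.of_forall fun t => ?_)
      (h.hasDerivAt s)
    show x t ⬝ᵥ x t ≤ x s ⬝ᵥ x s
    rw [← en3_sq, ← en3_sq, hs]
    exact pow_le_pow_left₀ (Real.sqrt_nonneg _) (hmax t) 2
  have hv0 : v 0 ≠ 0 := by simpa using hli.ne_zero 1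
  obtain ⟨A, hA, hx, hv⟩ := exists_mem_specialOrthogonalGroup_mulVec_eq hli
    (by rw [← en3_sq, ← en3_sq, hc])
    (h.dotProduct_self_eq_of_dotProduct_eq_zero hf0 hfmono hv0 hvc (horth rfl) (horth hc) hc.symm)
    (horth rfl) (horth hc)
  exact h.mem_rotationalPeriods huniq hA hx hv

end IsCentralForceSolution

theorem stmt18_general (f Vd : ℝ → ℝ)
    (hf0 : f 0 = 0) (hfmono : StrictMonoOn f (Set.Ici 0))
    (xs vs : ℝ → Fin 3 → ℝ) (τs : ℝ) (hτs : 0 < τs)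
    -- `xs` is a solution of the central force problem, with derivative `vs`
    (hx0 : ∀ t, xs t ≠ 0)
    (hxv : ∀ t, HasDerivAt xs (vs t) t)
    (heq : ∀ t, HasDerivAt (fun τ => phiMap f (vs τ))
      ((Vd (en3 (xs t)) / en3 (xs t)) • xs t) t)
    -- lies in the plane `x₃ = 0`
    (hplanar : ∀ t, xs t 2 = 0)
    -- non-rectilinear: `xs(t)` and `ẋs(t)` are linearly independent
    (hnr : ∀ t, LinearIndependent ℝ ![xs t, vs t])
    -- `τs` is the minimal period of `|xs|`
    (hτper : Function.Periodic (fun t => en3 (xs t)) τs)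
    (hτmin : ∀ τ : ℝ, 0 < τ → Function.Periodic (fun t => en3 (xs t)) τ → τs ≤ τ)
    -- normalization: `xs 0 = (max|xs|, 0, 0)`, positive angular momentum
    (hmax : ∀ t, en3 (xs t) ≤ en3 (xs 0))
    -- uniqueness for the Cauchy problem
    (huniq : ∀ y vy : ℝ → Fin 3 → ℝ,
      (∀ t, y t ≠ 0) →
      (∀ t, HasDerivAt y (vy t) t) →
      (∀ t, HasDerivAt (fun τ => phiMap f (vy τ))
        ((Vd (en3 (y t)) / en3 (y t)) • y t) t) →
      y 0 = xs 0 → vy 0 = vs 0 → y = xs) :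
    ∀ y ∈ {y : ℝ → Fin 3 → ℝ | ∃ (M : Matrix (Fin 3) (Fin 3) ℝ) (θ : ℝ),
        Mᵀ * M = 1 ∧ y = fun t => M *ᵥ xs (t - θ)},
      ∃! Mθ : Matrix (Fin 3) (Fin 3) ℝ × ℝ,
        (Mθ.1ᵀ * Mθ.1 = 1 ∧ Mθ.1.det = 1) ∧ 0 ≤ Mθ.2 ∧ Mθ.2 < τs ∧
          y = fun t => Mθ.1 *ᵥ xs (t - Mθ.2) := by
  have hsol : IsCentralForceSolution f Vd xs vs := ⟨hx0, hxv, heq⟩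
  have hτ : τs ∈ rotationalPeriods xs :=
    hsol.mem_rotationalPeriods_of_en3_eq_max hf0 hfmono
      (fun y vy hy => huniq y vy hy.ne_zero hy.hasDerivAt hy.hasDerivAt_phiMap) (hnr 0)
      (by simpa using (hnr τs).ne_zero 1) hmax (by simpa using hτper 0)
  rintro _ ⟨M, θ, hM, rfl⟩
  obtain ⟨N, hN, hNM⟩ := exists_mem_specialOrthogonalGroup_mulVec_eq_of_apply_two_eq_zero
    ((mem_orthogonalGroup_iff' _ _).2 hM)
  obtain ⟨S, hS, hSx⟩ := (rotationalPeriods xs).zsmul_mem hτ (-toIcoDiv hτs 0 θ)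
  have hrep : (fun t => M *ᵥ xs (t - θ)) = fun t => (N * S) *ᵥ xs (t - toIcoMod hτs 0 θ) := by
    funext t
    rw [← hNM _ (hplanar _), ← mulVec_mulVec, ← hSx, neg_zsmul]
    congr 2
    linarith [toIcoMod_add_toIcoDiv_zsmul hτs 0 θ]
  refine ⟨(N * S, toIcoMod hτs 0 θ), ⟨mem_specialOrthogonalGroup_iff_transpose_mul_self.1
    (mul_mem hN hS), (toIcoMod_mem_Ico' hτs θ).1, (toIcoMod_mem_Ico' hτs θ).2, hrep⟩, ?_⟩
  rintro ⟨A, α⟩ ⟨hA, hα₀, hατ, hAα⟩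
  obtain ⟨rfl, rfl⟩ := eq_and_eq_of_mulVec_comp_sub_eq (hxv 0) (hnr 0) hτmin
    (mem_specialOrthogonalGroup_iff_transpose_mul_self.2 hA) (mul_mem hN hS) ⟨hα₀, hατ⟩
    (toIcoMod_mem_Ico' hτs θ) fun t => congrFun (hAα.symm.trans hrep) t
  rfl

/-- The map `Ψ : SO(3) × ℝ/τ*ℤ → M₃`, `Ψ(M,θ) = M x*(·−θ)`, is a bijection: every element
of `M₃ = {M x*(·−θ) : M ∈ O(3), θ ∈ ℝ}` has a unique representation `M x*(·−θ)` with
`M ∈ SO(3)` and `θ ∈ [0,τ*)`, where `x*` is a non-circular non-rectilinear periodic solution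
of the central force equation in `ℝ³` lying in the plane `x₃ = 0`, normalized so that
`x*(0) = (max|x*|, 0, 0)` with positive angular momentum, and `τ*` is the minimal period
of `|x*|`. -/
theorem stmt18 (f V Vd : ℝ → ℝ)
    (hf0 : f 0 = 0) (hfmono : StrictMonoOn f (Set.Ici 0))
    (hV : ∀ r : ℝ, 0 < r → HasDerivAt V (Vd r) r)
    (xs vs : ℝ → Fin 3 → ℝ) (Ts τs : ℝ) (hTs : 0 < Ts) (hτs : 0 < τs)
    -- `xs` is a solution of the central force problem, with derivative `vs`
    (hx0 : ∀ t, xs t ≠ 0)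
    (hxv : ∀ t, HasDerivAt xs (vs t) t)
    (heq : ∀ t, HasDerivAt (fun τ => phiMap f (vs τ))
      ((Vd (en3 (xs t)) / en3 (xs t)) • xs t) t)
    -- periodic
    (hper : Function.Periodic xs Ts)
    -- lies in the plane `x₃ = 0`
    (hplanar : ∀ t, xs t 2 = 0)
    -- non-circular: `|xs|` is non-constant
    (hnc : ¬ ∀ t s : ℝ, en3 (xs t) = en3 (xs s))
    -- non-rectilinear: `xs(t)` and `ẋs(t)` are linearly independent
    (hnr : ∀ t, LinearIndependent ℝ ![xs t, vs t])
    -- `τs` is the minimal period of `|xs|`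
    (hτper : Function.Periodic (fun t => en3 (xs t)) τs)
    (hτmin : ∀ τ : ℝ, 0 < τ → Function.Periodic (fun t => en3 (xs t)) τ → τs ≤ τ)
    -- normalization: `xs 0 = (max|xs|, 0, 0)`, positive angular momentum
    (hnorm : xs 0 = ![en3 (xs 0), 0, 0])
    (hmax : ∀ t, en3 (xs t) ≤ en3 (xs 0))
    (hL : 0 < crossProduct (xs 0) (phiMap f (vs 0)) 2)
    -- uniqueness for the Cauchy problem
    (huniq : ∀ y vy : ℝ → Fin 3 → ℝ,
      (∀ t, y t ≠ 0) →
      (∀ t, HasDerivAt y (vy t) t) →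
      (∀ t, HasDerivAt (fun τ => phiMap f (vy τ))
        ((Vd (en3 (y t)) / en3 (y t)) • y t) t) →
      y 0 = xs 0 → vy 0 = vs 0 → y = xs) :
    ∀ y ∈ {y : ℝ → Fin 3 → ℝ | ∃ (M : Matrix (Fin 3) (Fin 3) ℝ) (θ : ℝ),
        Mᵀ * M = 1 ∧ y = fun t => M *ᵥ xs (t - θ)},
      ∃! Mθ : Matrix (Fin 3) (Fin 3) ℝ × ℝ,
        (Mθ.1ᵀ * Mθ.1 = 1 ∧ Mθ.1.det = 1) ∧ 0 ≤ Mθ.2 ∧ Mθ.2 < τs ∧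
          y = fun t => Mθ.1 *ᵥ xs (t - Mθ.2) :=
  stmt18_general f Vd hf0 hfmono xs vs τs hτs hx0 hxv heq hplanar hnr hτper hτmin hmax huniq
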